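/- If K_+ and K_− differ by a crossing change at a single crossing c₁, then W(L_{c₁}) computed in K_+ equals −W(L_{ĉ₁}) computed in K_−. -/

import Mathlib

open scoped Classical
open LaurentPolynomial

noncomputable section

/-- A Gauss diagram for an oriented virtual knot with `n` classical crossings: a circle
with `2 * n` marked points (positions in `ZMod (2*n)`, traversed in cyclic order), and for
each crossing `c` a signed oriented chord, recorded by the position `over c` of its
over-passage (head), the position `under c` of its under-passage (tail), and its sign. -/
structure GaussDiagram (n : ℕ) where
  over' : Fin n → ZMod (2 * n)
  under : Fin n → ZMod (2 * n)
  sign : Fin n → ℤ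
  endpoints_inj : Function.Injective
    (fun p : Fin n × Bool => if p.2 then over' p.1 else under p.1)
  sign_pm : ∀ c, sign c = 1 ∨ sign c = -1

/-- The position of the over-passage of crossing `c` (the field `over` of the original). -/
abbrev GaussDiagram.over {n : ℕ} (G : GaussDiagram n) : Fin n → ZMod (2 * n) := G.over'

namespace GaussDiagram

/-- `x` lies strictly inside the arc running forward (in the orientation of the circle)
from `a` to `b`. -/
def Between {m : ℕ} (a b x : ZMod m) : Prop :=
  (x - a).val < (b - a).val ∧ x ≠ a

variable {n : ℕ}

/-- After orientedly smoothing the crossing `c`, the first component of the resulting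
2-component link `L_c` (the component carrying the dot placed on the incoming understrand
of `c`) is the arc running forward from the over-passage of `c` to its under-passage. -/
def onComp1 (G : GaussDiagram n) (c : Fin n) (x : ZMod (2 * n)) : Prop :=
  Between (G.over c) (G.under c) x

/-- The chords `c` and `d` intersect (interleave): exactly one endpoint of `d` lies in the
arc cut out by `c`; equivalently `d` becomes a linking crossing of the smoothed link `L_c`. -/
def Crosses (G : GaussDiagram n) (c d : Fin n) : Prop :=
  Xor' (G.onComp1 c (G.over d)) (G.onComp1 c (G.under d))

/-- `d ∈ P_c`: `d` intersects `c` positively (traveling along the first component of `L_c`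
one passes *over* `d`). -/
def PosAt (G : GaussDiagram n) (c d : Fin n) : Prop :=
  G.Crosses c d ∧ G.onComp1 c (G.over d)

/-- `d ∈ N_c`: `d` intersects `c` negatively (traveling along the first component of `L_c`
one passes *under* `d`). -/
def NegAt (G : GaussDiagram n) (c d : Fin n) : Prop :=
  G.Crosses c d ∧ G.onComp1 c (G.under d)

/-- The wriggle number `W(L_c) = lk_O(L_c) - lk_U(L_c)` of the ordered 2-component link
obtained by the oriented smoothing at `c`. -/
def wriggle (G : GaussDiagram n) (c : Fin n) : ℤ :=
  (∑ d ∈ Finset.univ.filter (fun d => G.PosAt c d), G.sign d)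
    - ∑ d ∈ Finset.univ.filter (fun d => G.NegAt c d), G.sign d

/-- The writhe: the sum of the signs of all crossings. -/
def writhe (G : GaussDiagram n) : ℤ := ∑ c, G.sign c

/-- The Wriggle Polynomial `W_K(t) = Σ_c sign(c) · t^{W(L_c)} - writhe(K)`, as a Laurent
polynomial over `ℤ`. -/
def wrigglePoly (G : GaussDiagram n) : LaurentPolynomial ℤ :=
  (∑ c, C (G.sign c) * T (G.wriggle c)) - C G.writhe

end GaussDiagram

namespace GaussDiagram

variable {n : ℕ}

/-- `G'` is obtained from `G` by a crossing change at the crossing `c₁`: the over/under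
data at `c₁` is exchanged (the chord is reversed) and its sign is switched, while all
other crossings are unchanged. -/
def IsCrossingChange (G G' : GaussDiagram n) (c₁ : Fin n) : Prop :=
  G'.over = Function.update G.over c₁ (G.under c₁) ∧
  G'.under = Function.update G.under c₁ (G.over c₁) ∧
  G'.sign = Function.update G.sign c₁ (-(G.sign c₁))

/-- A crossing is odd iff the two occurrences of the crossing in the Gauss code are
separated by an odd number of letters, i.e. the forward distance between the two endpoints
of its chord is even. -/
def OddCrossing (G : GaussDiagram n) (c : Fin n) : Prop :=
  Even ((G.under c - G.over c).val)

end GaussDiagram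

open GaussDiagram

/-! Reversing the chord of `c₁` exchanges the two arcs it cuts out of the circle, so every
marked point other than its endpoints changes side (`GaussDiagram.between_swap_iff_not`).
A chord `d ≠ c₁` therefore still crosses `c₁`, but its over- and under-passage trade places
with respect to the first component of `L_{c₁}`: the sets `P_{c₁}` and `N_{c₁}` are exchanged,
while the signs of all crossings other than `c₁` are unchanged. -/

theorem ZMod.val_sub_lt_val_neg_iff {m : ℕ} [NeZero m] {u v : ZMod m} (hv : v ≠ 0)
    (huv : u ≠ v) :
    (u - v).val < (-v).val ↔ v.val ≤ u.val := by
  have hu_lt : u.val < m := ZMod.val_lt u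
  rw [ZMod.neg_val, if_neg hv]
  rcases le_or_gt v.val u.val with hle | hlt
  · rw [ZMod.val_sub hle]
    omega
  · have hvu : v - u ≠ 0 := sub_ne_zero.mpr huv.symm
    rw [← neg_sub, ZMod.neg_val, if_neg hvu, ZMod.val_sub hlt.le]
    omega

namespace GaussDiagram

theorem between_swap_iff_not {m : ℕ} [NeZero m] {a b x : ZMod m} (hab : a ≠ b) (hxa : x ≠ a)
    (hxb : x ≠ b) : Between b a x ↔ ¬ Between a b x := by
  have hv : b - a ≠ 0 := sub_ne_zero.mpr hab.symm
  have huv : x - a ≠ b - a := fun h => hxb (sub_left_injective h)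
  have hxb' : x - b = (x - a) - (b - a) := by ring
  have hab' : a - b = -(b - a) := by ring
  simp only [Between, hxa, hxb, ne_eq, not_false_eq_true, and_true, not_lt, hxb', hab',
    ZMod.val_sub_lt_val_neg_iff hv huv]

variable {n : ℕ}

theorem over_injective (G : GaussDiagram n) : Function.Injective G.over := fun c d h =>
  congrArg Prod.fst (G.endpoints_inj (a₁ := (c, true)) (a₂ := (d, true)) h)

theorem under_injective (G : GaussDiagram n) : Function.Injective G.under := fun c d h =>
  congrArg Prod.fst (G.endpoints_inj (a₁ := (c, false)) (a₂ := (d, false)) h)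

theorem over_ne_under (G : GaussDiagram n) (c d : Fin n) : G.over c ≠ G.under d := fun h =>
  Bool.noConfusion (congrArg Prod.snd (G.endpoints_inj (a₁ := (c, true)) (a₂ := (d, false)) h))

theorem crosses_iff (G : GaussDiagram n) (c d : Fin n) :
    G.Crosses c d ↔ Xor (G.onComp1 c (G.over d)) (G.onComp1 c (G.under d)) :=
  Iff.rfl

theorem not_crosses_self (G : GaussDiagram n) (c : Fin n) : ¬ G.Crosses c c := by
  simp [crosses_iff, onComp1, Between]

theorem not_posAt_self (G : GaussDiagram n) (c : Fin n) : ¬ G.PosAt c c :=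
  fun h => G.not_crosses_self c h.1

theorem not_negAt_self (G : GaussDiagram n) (c : Fin n) : ¬ G.NegAt c c :=
  fun h => G.not_crosses_self c h.1

namespace IsCrossingChange

variable {G G' : GaussDiagram n} {c₁ : Fin n}

theorem over_self (h : IsCrossingChange G G' c₁) : G'.over c₁ = G.under c₁ := by
  simp [h.1]

theorem under_self (h : IsCrossingChange G G' c₁) : G'.under c₁ = G.over c₁ := by
  simp [h.2.1]

theorem over_of_ne (h : IsCrossingChange G G' c₁) {d : Fin n} (hd : d ≠ c₁) :
    G'.over d = G.over d := by
  simp [h.1, hd]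

theorem under_of_ne (h : IsCrossingChange G G' c₁) {d : Fin n} (hd : d ≠ c₁) :
    G'.under d = G.under d := by
  simp [h.2.1, hd]

theorem sign_of_ne (h : IsCrossingChange G G' c₁) {d : Fin n} (hd : d ≠ c₁) :
    G'.sign d = G.sign d := by
  simp [h.2.2, hd]

theorem onComp1_iff_not (h : IsCrossingChange G G' c₁) {x : ZMod (2 * n)}
    (hxo : x ≠ G.over c₁) (hxu : x ≠ G.under c₁) : G'.onComp1 c₁ x ↔ ¬ G.onComp1 c₁ x := by
  have : NeZero (2 * n) := ⟨by have := c₁.pos; omega⟩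
  rw [onComp1, onComp1, h.over_self, h.under_self]
  exact between_swap_iff_not (G.over_ne_under c₁ c₁) hxo hxu

theorem onComp1_over_iff_not (h : IsCrossingChange G G' c₁) {d : Fin n} (hd : d ≠ c₁) :
    G'.onComp1 c₁ (G'.over d) ↔ ¬ G.onComp1 c₁ (G.over d) := by
  rw [h.over_of_ne hd]
  exact h.onComp1_iff_not (fun e => hd (G.over_injective e)) (G.over_ne_under d c₁)

theorem onComp1_under_iff_not (h : IsCrossingChange G G' c₁) {d : Fin n} (hd : d ≠ c₁) :
    G'.onComp1 c₁ (G'.under d) ↔ ¬ G.onComp1 c₁ (G.under d) := by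
  rw [h.under_of_ne hd]
  exact h.onComp1_iff_not (fun e => G.over_ne_under c₁ d e.symm)
    (fun e => hd (G.under_injective e))

theorem posAt_iff_negAt (h : IsCrossingChange G G' c₁) (d : Fin n) :
    G'.PosAt c₁ d ↔ G.NegAt c₁ d := by
  by_cases hd : d = c₁
  · subst hd
    exact iff_of_false (G'.not_posAt_self d) (G.not_negAt_self d)
  · simp only [PosAt, NegAt, crosses_iff, h.onComp1_over_iff_not hd, h.onComp1_under_iff_not hd,
      xor_def]
    tauto

theorem negAt_iff_posAt (h : IsCrossingChange G G' c₁) (d : Fin n) :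
    G'.NegAt c₁ d ↔ G.PosAt c₁ d := by
  by_cases hd : d = c₁
  · subst hd
    exact iff_of_false (G'.not_negAt_self d) (G.not_posAt_self d)
  · simp only [PosAt, NegAt, crosses_iff, h.onComp1_over_iff_not hd, h.onComp1_under_iff_not hd,
      xor_def]
    tauto

end IsCrossingChange

end GaussDiagram

/-- If `K₊` and `K₋` differ by a crossing change at a single crossing `c₁`,
then `W(L_{c₁})` computed in `K₊` equals `-W(L_{ĉ₁})` computed in `K₋` (after smoothing,
one gets the same link with the order of its two components exchanged, and the wriggle
number changes sign under exchange of the component order). -/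
theorem wriggle_crossingChange_self {n : ℕ} (G G' : GaussDiagram n) (c₁ : Fin n)
    (h : GaussDiagram.IsCrossingChange G G' c₁) :
    G.wriggle c₁ = - G'.wriggle c₁ := by
  have sum_sign_eq {p : Fin n → Prop} (hp : ∀ d, p d → d ≠ c₁) :
      ∑ d ∈ Finset.univ.filter p, G'.sign d = ∑ d ∈ Finset.univ.filter p, G.sign d :=
    Finset.sum_congr rfl fun d hd => h.sign_of_ne (hp d (Finset.mem_filter.mp hd).2)
  have hPos : ∑ d ∈ Finset.univ.filter (G'.PosAt c₁), G'.sign d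
      = ∑ d ∈ Finset.univ.filter (G.NegAt c₁), G.sign d := by
    simp only [h.posAt_iff_negAt]
    exact sum_sign_eq fun d hd e => G.not_negAt_self c₁ (e ▸ hd)
  have hNeg : ∑ d ∈ Finset.univ.filter (G'.NegAt c₁), G'.sign d
      = ∑ d ∈ Finset.univ.filter (G.PosAt c₁), G.sign d := by
    simp only [h.negAt_iff_posAt]
    exact sum_sign_eq fun d hd e => G.not_posAt_self c₁ (e ▸ hd)
  rw [wriggle, wriggle, hPos, hNeg]
  ring
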